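/- arXiv:2205.02199 — 2 statements merged into one kernel-verified Lean document; each statement's English description precedes it below -/
import Mathlib

section
/- Given positive parameters λ, d, β, a, p, N, μ, c, s, φ and a positive integer m, the sequences defined by X_{n+1} = (λφ + X_n)/(1 + dφ + βφ V_n), Y_{n+1} = (Y_n + βφ X_{n-m+1} V_{n-m})/(1 + aφ + pφ Z_n), V_{n+1} = (V_n + aNφ Y_{n+1})/(1 + μφ), Z_{n+1} = (Z_n + cφ X_n Y_{n+1} Z_n)/(1 + sφ), with nonnegative initial data X_k, Y_k, V_k, Z_k for k = -m,...,0 and strictly positive values at k = 0, remain nonnegative for all n ≥ 0. -/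
/-! Each update of the scheme divides a sum of products of nonnegative quantities by a positive
denominator, and reads only values at earlier times (`Y (n + 1)` is computed before `V (n + 1)` and
`Z (n + 1)`), so nonnegativity propagates by strong induction from the initial window `[-m, 0]`. -/

theorem Int.le_induction_of_window {P : ℤ → Prop} {b n₀ : ℤ}
    (hinit : ∀ k, b ≤ k → k ≤ n₀ → P k)
    (hstep : ∀ n, n₀ ≤ n → (∀ k, b ≤ k → k ≤ n → P k) → P (n + 1)) :
    ∀ n, b ≤ n → P n := by
  have hwindow : ∀ n, n₀ ≤ n → ∀ k, b ≤ k → k ≤ n → P k := by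
    intro n hn
    induction n, hn using Int.leInduction with
    | base => exact hinit
    | succ n hn ih =>
      intro k hbk hkn
      rcases (show k ≤ n ∨ k = n + 1 by omega) with hkn | rfl
      · exact ih k hbk hkn
      · exact hstep n hn ih
  intro n hbn
  rcases le_total n n₀ with hn | hn
  · exact hinit n hbn hn
  · exact hwindow n hn n hbn le_rfl

theorem nsfd_positivity_general
    (lam d β a p N μ c s φ : ℝ)
    (hlam : 0 < lam) (hd : 0 < d) (hβ : 0 < β) (ha : 0 < a) (hp : 0 < p)
    (hN : 0 < N) (hμ : 0 < μ) (hc : 0 < c) (hs : 0 < s) (hφ : 0 < φ)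
    (m : ℕ) (hm : 0 < m)
    (X Y V Z : ℤ → ℝ)
    (hX : ∀ n : ℤ, 0 ≤ n → X (n + 1) = (lam * φ + X n) / (1 + d * φ + β * φ * V n))
    (hY : ∀ n : ℤ, 0 ≤ n →
      Y (n + 1) = (Y n + β * φ * X (n - m + 1) * V (n - m)) / (1 + a * φ + p * φ * Z n))
    (hV : ∀ n : ℤ, 0 ≤ n → V (n + 1) = (V n + a * N * φ * Y (n + 1)) / (1 + μ * φ))
    (hZ : ∀ n : ℤ, 0 ≤ n → Z (n + 1) = (Z n + c * φ * X n * Y (n + 1) * Z n) / (1 + s * φ))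
    (hinit : ∀ k : ℤ, -(m : ℤ) ≤ k → k ≤ 0 → 0 ≤ X k ∧ 0 ≤ Y k ∧ 0 ≤ V k ∧ 0 ≤ Z k) :
    ∀ n : ℤ, 0 ≤ n → 0 ≤ X n ∧ 0 ≤ Y n ∧ 0 ≤ V n ∧ 0 ≤ Z n := by
  have hall := Int.le_induction_of_window (b := -(m : ℤ)) (n₀ := 0) hinit fun n hn ih ↦ by
    obtain ⟨hXn, hYn, hVn, hZn⟩ := ih n (by omega) le_rfl
    have hXdelay := (ih (n - m + 1) (by omega) (by omega)).1
    have hVdelay := (ih (n - m) (by omega) (by omega)).2.2.1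
    have hY1 : 0 ≤ Y (n + 1) := by rw [hY n hn]; bound
    refine ⟨?_, hY1, ?_, ?_⟩
    · rw [hX n hn]; bound
    · rw [hV n hn]; bound
    · rw [hZ n hn]; bound
  exact fun n hn ↦ hall n (by omega)

theorem nsfd_positivity
    (lam d β a p N μ c s φ : ℝ)
    (hlam : 0 < lam) (hd : 0 < d) (hβ : 0 < β) (ha : 0 < a) (hp : 0 < p)
    (hN : 0 < N) (hμ : 0 < μ) (hc : 0 < c) (hs : 0 < s) (hφ : 0 < φ)
    (m : ℕ) (hm : 0 < m)
    (X Y V Z : ℤ → ℝ)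
    (hX : ∀ n : ℤ, 0 ≤ n → X (n + 1) = (lam * φ + X n) / (1 + d * φ + β * φ * V n))
    (hY : ∀ n : ℤ, 0 ≤ n →
      Y (n + 1) = (Y n + β * φ * X (n - m + 1) * V (n - m)) / (1 + a * φ + p * φ * Z n))
    (hV : ∀ n : ℤ, 0 ≤ n → V (n + 1) = (V n + a * N * φ * Y (n + 1)) / (1 + μ * φ))
    (hZ : ∀ n : ℤ, 0 ≤ n → Z (n + 1) = (Z n + c * φ * X n * Y (n + 1) * Z n) / (1 + s * φ))
    (hinit : ∀ k : ℤ, -(m : ℤ) ≤ k → k ≤ 0 → 0 ≤ X k ∧ 0 ≤ Y k ∧ 0 ≤ V k ∧ 0 ≤ Z k)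
    (hpos0 : 0 < X 0 ∧ 0 < Y 0 ∧ 0 < V 0 ∧ 0 < Z 0) :
    ∀ n : ℤ, 0 ≤ n → 0 ≤ X n ∧ 0 ≤ Y n ∧ 0 ≤ V n ∧ 0 ≤ Z n :=
  nsfd_positivity_general lam d β a p N μ c s φ hlam hd hβ ha hp hN hμ hc hs hφ m hm X Y V Z hX hY
    hV hZ hinit
end

section
/- If λcμ - βsaN > 0 and βaN(λcμ - βsaN) - adcμ² > 0, then the point Ē = ((λcμ - βsaN)/(dcμ), dμs/(λcμ - βsaN), saNd/(λcμ - βsaN), (βaN(λcμ - βsaN) - adcμ²)/(pdcμ²)) is a fixed point of the discrete NSFD HIV system, and all four of its coordinates are strictly positive. -/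
/-!
At an equilibrium of the underlying ODE system every right-hand side balances
(`λ = dX + βXV`, `βXV = aY + pYZ`, `aNY = μV`, `cXYZ = sZ`), and each NSFD update has the
form `(u + φ·production) / (1 + φ·loss rate)`, which returns `u` exactly when production equals
`u` times the loss rate. So it suffices to check the four balances at `Ē`; they reduce to field
identities once `λcμ - βsaN ≠ 0`, and the two positivity hypotheses give the signs.
-/

noncomputable section Ebar

variable (lam d β a p N μ c s : ℝ)

def ebarX : ℝ := (lam * c * μ - β * s * a * N) / (d * c * μ)

def ebarY : ℝ := d * μ * s / (lam * c * μ - β * s * a * N)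

def ebarV : ℝ := s * a * N * d / (lam * c * μ - β * s * a * N)

def ebarZ : ℝ :=
  (β * a * N * (lam * c * μ - β * s * a * N) - a * d * c * μ ^ 2) / (p * d * c * μ ^ 2)

variable {lam d β a p N μ c s}

theorem ebar_balance_X (hd : d ≠ 0) (hc : c ≠ 0) (hμ : μ ≠ 0)
    (hR : lam * c * μ - β * s * a * N ≠ 0) :
    lam = d * ebarX lam d β a N μ c s + β * ebarX lam d β a N μ c s * ebarV lam d β a N μ c s := by
  unfold ebarX ebarV
  field_simp
  ring

theorem ebar_balance_Y (hp : p ≠ 0) (hd : d ≠ 0) (hc : c ≠ 0) (hμ : μ ≠ 0)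
    (hR : lam * c * μ - β * s * a * N ≠ 0) :
    β * ebarX lam d β a N μ c s * ebarV lam d β a N μ c s =
      a * ebarY lam d β a N μ c s +
        p * ebarY lam d β a N μ c s * ebarZ lam d β a p N μ c s := by
  unfold ebarX ebarY ebarV ebarZ
  field_simp
  ring

theorem ebar_balance_V :
    a * N * ebarY lam d β a N μ c s = μ * ebarV lam d β a N μ c s := by
  unfold ebarY ebarV
  ring

theorem ebar_balance_Z (hd : d ≠ 0) (hc : c ≠ 0) (hμ : μ ≠ 0)
    (hR : lam * c * μ - β * s * a * N ≠ 0) :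
    c * ebarX lam d β a N μ c s * ebarY lam d β a N μ c s = s := by
  unfold ebarX ebarY
  generalize lam * c * μ - β * s * a * N = R at hR ⊢
  field_simp

theorem ebar_pos (hd : 0 < d) (ha : 0 < a) (hp : 0 < p) (hN : 0 < N) (hμ : 0 < μ)
    (hc : 0 < c) (hs : 0 < s) (h1 : 0 < lam * c * μ - β * s * a * N)
    (h2 : 0 < β * a * N * (lam * c * μ - β * s * a * N) - a * d * c * μ ^ 2) :
    0 < ebarX lam d β a N μ c s ∧ 0 < ebarY lam d β a N μ c s ∧
      0 < ebarV lam d β a N μ c s ∧ 0 < ebarZ lam d β a p N μ c s := by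
  unfold ebarX ebarY ebarV ebarZ
  refine ⟨?_, ?_, ?_, ?_⟩ <;> positivity

end Ebar

theorem nsfd_fixed_of_balance {lam d β a p N μ c s φ X Y V Z : ℝ}
    (hd : 0 ≤ d) (hβ : 0 ≤ β) (ha : 0 ≤ a) (hp : 0 ≤ p) (hμ : 0 ≤ μ) (hs : 0 ≤ s)
    (hφ : 0 ≤ φ) (hV : 0 ≤ V) (hZ : 0 ≤ Z)
    (hbX : lam = d * X + β * X * V) (hbY : β * X * V = a * Y + p * Y * Z)
    (hbV : a * N * Y = μ * V) (hbZ : c * X * Y = s) :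
    (lam * φ + X) / (1 + d * φ + β * φ * V) = X ∧
    (Y + β * φ * X * V) / (1 + a * φ + p * φ * Z) = Y ∧
    (V + a * N * φ * Y) / (1 + μ * φ) = V ∧
    (Z + c * φ * X * Y * Z) / (1 + s * φ) = Z := by
  refine ⟨?_, ?_, ?_, ?_⟩ <;> rw [div_eq_iff (by positivity)]
  · linear_combination φ * hbX
  · linear_combination φ * hbY
  · linear_combination φ * hbV
  · linear_combination φ * Z * hbZ

theorem Ebar_equilibrium_general
    (lam d β a p N μ c s φ : ℝ)
    (hd : 0 < d) (hβ : 0 < β) (ha : 0 < a) (hp : 0 < p)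
    (hN : 0 < N) (hμ : 0 < μ) (hc : 0 < c) (hs : 0 < s) (hφ : 0 < φ)
    (h1 : 0 < lam * c * μ - β * s * a * N)
    (h2 : 0 < β * a * N * (lam * c * μ - β * s * a * N) - a * d * c * μ ^ 2) :
    let Xb := (lam * c * μ - β * s * a * N) / (d * c * μ)
    let Yb := d * μ * s / (lam * c * μ - β * s * a * N)
    let Vb := s * a * N * d / (lam * c * μ - β * s * a * N)
    let Zb := (β * a * N * (lam * c * μ - β * s * a * N) - a * d * c * μ ^ 2) /
      (p * d * c * μ ^ 2)
    ((lam * φ + Xb) / (1 + d * φ + β * φ * Vb) = Xb ∧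
     (Yb + β * φ * Xb * Vb) / (1 + a * φ + p * φ * Zb) = Yb ∧
     (Vb + a * N * φ * Yb) / (1 + μ * φ) = Vb ∧
     (Zb + c * φ * Xb * Yb * Zb) / (1 + s * φ) = Zb) ∧
    (0 < Xb ∧ 0 < Yb ∧ 0 < Vb ∧ 0 < Zb) := by
  have hR := h1.ne'
  obtain ⟨hX, hY, hV, hZ⟩ := ebar_pos hd ha hp hN hμ hc hs h1 h2
  exact ⟨nsfd_fixed_of_balance hd.le hβ.le ha.le hp.le hμ.le hs.le hφ.le hV.le hZ.le
      (ebar_balance_X hd.ne' hc.ne' hμ.ne' hR)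
      (ebar_balance_Y hp.ne' hd.ne' hc.ne' hμ.ne' hR)
      ebar_balance_V (ebar_balance_Z hd.ne' hc.ne' hμ.ne' hR),
    hX, hY, hV, hZ⟩

theorem Ebar_equilibrium
    (lam d β a p N μ c s φ : ℝ)
    (hlam : 0 < lam) (hd : 0 < d) (hβ : 0 < β) (ha : 0 < a) (hp : 0 < p)
    (hN : 0 < N) (hμ : 0 < μ) (hc : 0 < c) (hs : 0 < s) (hφ : 0 < φ)
    (h1 : 0 < lam * c * μ - β * s * a * N)
    (h2 : 0 < β * a * N * (lam * c * μ - β * s * a * N) - a * d * c * μ ^ 2) :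
    let Xb := (lam * c * μ - β * s * a * N) / (d * c * μ)
    let Yb := d * μ * s / (lam * c * μ - β * s * a * N)
    let Vb := s * a * N * d / (lam * c * μ - β * s * a * N)
    let Zb := (β * a * N * (lam * c * μ - β * s * a * N) - a * d * c * μ ^ 2) /
      (p * d * c * μ ^ 2)
    ((lam * φ + Xb) / (1 + d * φ + β * φ * Vb) = Xb ∧
     (Yb + β * φ * Xb * Vb) / (1 + a * φ + p * φ * Zb) = Yb ∧
     (Vb + a * N * φ * Yb) / (1 + μ * φ) = Vb ∧
     (Zb + c * φ * Xb * Yb * Zb) / (1 + s * φ) = Zb) ∧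
    (0 < Xb ∧ 0 < Yb ∧ 0 < Vb ∧ 0 < Zb) :=
  Ebar_equilibrium_general lam d β a p N μ c s φ hd hβ ha hp hN hμ hc hs hφ h1 h2
end
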